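/- The Balsara MHD vortex satisfies the steady MHD energy equation: with the fields below, total pressure p_t = p + (B₁² + B₂²)/(8π), and total energy density ρE = p/(γ−1) + ρ(u²+v²)/2 + (B₁²+B₂²)/(8π) for a fixed γ > 1, at every point (x,y) ∈ ℝ² one has ∂_x(u(ρE + p_t) − B₁(uB₁ + vB₂)/(4π)) + ∂_y(v(ρE + p_t) − B₂(uB₁ + vB₂)/(4π)) = 0. -/

import Mathlib

/-!
The magnetic field is parallel to the velocity, so the magnetic part `v|B|²/(4π) − B(v·B)/(4π)`
of the energy flux vanishes, and what is left, `v (p/(γ−1) + p + |v|²/2)`, is radial except for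
the rotation `(−(y−5), x−5)` carried by `v`. The flux is therefore `h(r²) · (y−5, −(x−5))` for a
radial profile `h`, and any such field is divergence free: its two partial derivatives are
`±2 h'(r²)(x−5)(y−5)`.
-/

open Real

/-- Squared distance from the vortex center `(5,5)`. -/
noncomputable def mhdR2 (x y : ℝ) : ℝ := (x - 5)^2 + (y - 5)^2

/-- `x`-velocity of the Balsara MHD vortex. -/
noncomputable def mhdU (κ q x y : ℝ) : ℝ :=
  -(κ / (2 * π)) * exp (q * (1 - mhdR2 x y)) * (y - 5)

/-- `y`-velocity of the Balsara MHD vortex. -/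
noncomputable def mhdV (κ q x y : ℝ) : ℝ :=
  (κ / (2 * π)) * exp (q * (1 - mhdR2 x y)) * (x - 5)

/-- `x`-component of the magnetic field of the Balsara MHD vortex. -/
noncomputable def mhdB1 (μ q x y : ℝ) : ℝ :=
  -(μ / (2 * π)) * exp (q * (1 - mhdR2 x y)) * (y - 5)

/-- `y`-component of the magnetic field of the Balsara MHD vortex. -/
noncomputable def mhdB2 (μ q x y : ℝ) : ℝ :=
  (μ / (2 * π)) * exp (q * (1 - mhdR2 x y)) * (x - 5)

/-- Hydrodynamic pressure of the Balsara MHD vortex. -/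
noncomputable def mhdP (κ μ q x y : ℝ) : ℝ :=
  1 + (1 / (64 * q * π^3)) * (μ^2 * (1 - 2 * q * mhdR2 x y) - 4 * π * κ^2)
        * exp (2 * q * (1 - mhdR2 x y))

/-- Total pressure `p_t = p + |B|²/(8π)` of the Balsara MHD vortex. -/
noncomputable def mhdPt (κ μ q x y : ℝ) : ℝ :=
  mhdP κ μ q x y + ((mhdB1 μ q x y)^2 + (mhdB2 μ q x y)^2) / (8 * π)

/-- Total energy density `ρE = p/(γ−1) + ρ(u²+v²)/2 + |B|²/(8π)` of the
Balsara MHD vortex (with `ρ = 1`). -/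
noncomputable def mhdRhoE (γ κ μ q x y : ℝ) : ℝ :=
  mhdP κ μ q x y / (γ - 1)
    + (1 : ℝ) * ((mhdU κ q x y)^2 + (mhdV κ q x y)^2) / 2
    + ((mhdB1 μ q x y)^2 + (mhdB2 μ q x y)^2) / (8 * π)

theorem deriv_add_deriv_radial_rotation_eq_zero {h : ℝ → ℝ} {a b x y : ℝ}
    (hh : DifferentiableAt ℝ h ((x - a) ^ 2 + (y - b) ^ 2)) :
    deriv (fun x' => (y - b) * h ((x' - a) ^ 2 + (y - b) ^ 2)) x
      + deriv (fun y' => -(x - a) * h ((x - a) ^ 2 + (y' - b) ^ 2)) y = 0 := by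
  have hx : HasDerivAt (fun x' => (x' - a) ^ 2 + (y - b) ^ 2) (2 * (x - a)) x := by
    simpa using (((hasDerivAt_id x).sub_const a).pow 2).add_const ((y - b) ^ 2)
  have hy : HasDerivAt (fun y' => (x - a) ^ 2 + (y' - b) ^ 2) (2 * (y - b)) y := by
    simpa using (((hasDerivAt_id y).sub_const b).pow 2).const_add ((x - a) ^ 2)
  have hhx := (hh.hasDerivAt.comp x hx).const_mul (y - b)
  have hhy := (hh.hasDerivAt.comp y hy).const_mul (-(x - a))
  rw [Function.comp_def] at hhx hhy
  rw [hhx.deriv, hhy.deriv]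
  ring

noncomputable def mhdPressureProfile (κ μ q w : ℝ) : ℝ :=
  1 + (1 / (64 * q * π ^ 3)) * (μ ^ 2 * (1 - 2 * q * w) - 4 * π * κ ^ 2) * exp (2 * q * (1 - w))

noncomputable def mhdEnergyFluxProfile (γ κ μ q w : ℝ) : ℝ :=
  -(κ / (2 * π)) * exp (q * (1 - w))
    * (mhdPressureProfile κ μ q w / (γ - 1) + mhdPressureProfile κ μ q w
      + (κ / (2 * π)) ^ 2 * exp (q * (1 - w)) ^ 2 * w / 2)

theorem differentiable_mhdEnergyFluxProfile (γ κ μ q : ℝ) :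
    Differentiable ℝ (mhdEnergyFluxProfile γ κ μ q) := by
  unfold mhdEnergyFluxProfile mhdPressureProfile
  fun_prop

theorem mhd_energy_flux_x_eq (γ κ μ q x y : ℝ) :
    mhdU κ q x y * (mhdRhoE γ κ μ q x y + mhdPt κ μ q x y)
        - mhdB1 μ q x y * (mhdU κ q x y * mhdB1 μ q x y
            + mhdV κ q x y * mhdB2 μ q x y) / (4 * π)
      = (y - 5) * mhdEnergyFluxProfile γ κ μ q (mhdR2 x y) := by
  simp only [mhdRhoE, mhdPt, mhdP, mhdU, mhdV, mhdB1, mhdB2, mhdEnergyFluxProfile,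
    mhdPressureProfile, mhdR2]
  ring

theorem mhd_energy_flux_y_eq (γ κ μ q x y : ℝ) :
    mhdV κ q x y * (mhdRhoE γ κ μ q x y + mhdPt κ μ q x y)
        - mhdB2 μ q x y * (mhdU κ q x y * mhdB1 μ q x y
            + mhdV κ q x y * mhdB2 μ q x y) / (4 * π)
      = -(x - 5) * mhdEnergyFluxProfile γ κ μ q (mhdR2 x y) := by
  simp only [mhdRhoE, mhdPt, mhdP, mhdU, mhdV, mhdB1, mhdB2, mhdEnergyFluxProfile,
    mhdPressureProfile, mhdR2]
  ring

theorem mhd_vortex_energy_general (γ κ μ q : ℝ) (x y : ℝ) :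
    deriv (fun x' => mhdU κ q x' y * (mhdRhoE γ κ μ q x' y + mhdPt κ μ q x' y)
        - mhdB1 μ q x' y * (mhdU κ q x' y * mhdB1 μ q x' y
            + mhdV κ q x' y * mhdB2 μ q x' y) / (4 * π)) x
      + deriv (fun y' => mhdV κ q x y' * (mhdRhoE γ κ μ q x y' + mhdPt κ μ q x y')
        - mhdB2 μ q x y' * (mhdU κ q x y' * mhdB1 μ q x y'
            + mhdV κ q x y' * mhdB2 μ q x y') / (4 * π)) y = 0 := by
  simp only [mhd_energy_flux_x_eq, mhd_energy_flux_y_eq]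
  exact deriv_add_deriv_radial_rotation_eq_zero
    (differentiable_mhdEnergyFluxProfile γ κ μ q _)

/-- The Balsara MHD vortex satisfies the steady ideal-MHD energy equation
`∂_x(u(ρE + p_t) − B₁(uB₁ + vB₂)/(4π)) + ∂_y(v(ρE + p_t) − B₂(uB₁ + vB₂)/(4π)) = 0`
at every point. -/
theorem mhd_vortex_energy (γ κ μ q : ℝ) (hq : q ≠ 0) (hγ : 1 < γ) (x y : ℝ) :
    deriv (fun x' => mhdU κ q x' y * (mhdRhoE γ κ μ q x' y + mhdPt κ μ q x' y)
        - mhdB1 μ q x' y * (mhdU κ q x' y * mhdB1 μ q x' y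
            + mhdV κ q x' y * mhdB2 μ q x' y) / (4 * π)) x
      + deriv (fun y' => mhdV κ q x y' * (mhdRhoE γ κ μ q x y' + mhdPt κ μ q x y')
        - mhdB2 μ q x y' * (mhdU κ q x y' * mhdB1 μ q x y'
            + mhdV κ q x y' * mhdB2 μ q x y') / (4 * π)) y = 0 :=
  mhd_vortex_energy_general γ κ μ q x y
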